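/- Let X be a k-dimensional simplicial complex on a finite vertex set V with n vertices and Z_{k−1}(X;ℝ) ≠ {0}. Then for every f ∈ C^{k−1}(X;ℝ) with f ∉ B^{k−1}(X;ℝ) (f being also a (k−1)-cochain of the completion K(X), which has the same (k−1)-faces as X): λ(X)·⟨L^up_{k−1}(K(X))f, f⟩ ≤ n·⟨L^up_{k−1}(X)f, f⟩. -/

import Mathlib

open Finset

namespace HigherCheeger

variable {V : Type*} [DecidableEq V] [Fintype V] [LinearOrder V]

/-- An abstract simplicial complex: a family of finite subsets of `V`
closed under taking subsets. -/
def IsComplex (X : Finset (Finset V)) : Prop :=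
  ∀ σ ∈ X, ∀ τ ⊆ σ, τ ∈ X

/-- `X` is `k`-dimensional: every face has at most `k+1` vertices
and some face has exactly `k+1` vertices. -/
def IsDim (X : Finset (Finset V)) (k : ℕ) : Prop :=
  (∀ σ ∈ X, σ.card ≤ k + 1) ∧ ∃ σ ∈ X, σ.card = k + 1

/-- The faces of `X` of cardinality `c` (i.e. of dimension `c - 1`). -/
def faces (X : Finset (Finset V)) (c : ℕ) : Finset (Finset V) :=
  X.filter fun σ => σ.card = c

/-- `X` has complete `(k-1)`-skeleton: every subset of `V` of size at most `k` is a face. -/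
def CompleteSkeleton (X : Finset (Finset V)) (k : ℕ) : Prop :=
  ∀ σ : Finset V, σ.card ≤ k → σ ∈ X

/-- The `k`-dimensional completion `K(X)`. -/
def completion (X : Finset (Finset V)) (k : ℕ) : Finset (Finset V) :=
  X ∪ (Finset.univ.filter fun τ : Finset V => τ.card = k + 1 ∧ ∀ v ∈ τ, τ.erase v ∈ X)

/-- The complete `k`-dimensional complex `K_n^k` on the vertex set `V`. -/
def completeComplex (V : Type*) [DecidableEq V] [Fintype V] (k : ℕ) : Finset (Finset V) :=
  Finset.univ.filter fun σ : Finset V => σ.card ≤ k + 1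

/-- The oriented incidence number `[τ:σ]` (with respect to the linear order on `V`):
`(-1)^j` if `σ = τ \ {v_j}` where `v_j` is the `j`-th smallest vertex of `τ`, and `0` otherwise. -/
def incidence (τ σ : Finset V) : ℝ :=
  if σ ⊆ τ ∧ σ.card + 1 = τ.card then
    ∑ v ∈ τ \ σ, (-1 : ℝ) ^ (τ.filter fun w => w < v).card
  else 0

/-- The real coboundary operator `δ` applied to a cochain living on the faces of
cardinality `c`; the result lives on faces of cardinality `c + 1`. -/
def delta (X : Finset (Finset V)) (c : ℕ) (f : Finset V → ℝ) : Finset V → ℝ :=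
  fun τ => ∑ σ ∈ faces X c, incidence τ σ * f σ

/-- The real boundary operator `∂` (the adjoint of `δ`) applied to a cochain living
on the faces of cardinality `c`; the result lives on faces of cardinality `c - 1`. -/
def bdry (X : Finset (Finset V)) (c : ℕ) (f : Finset V → ℝ) : Finset V → ℝ :=
  fun σ => ∑ τ ∈ faces X c, incidence τ σ * f τ

/-- The inner product of two cochains on the faces of cardinality `c`. -/
def inn (X : Finset (Finset V)) (c : ℕ) (f g : Finset V → ℝ) : ℝ :=
  ∑ σ ∈ faces X c, f σ * g σ

/-- The upper Laplacian `L^up_{k-1} = ∂_k δ_{k-1}` acting on `(k-1)`-cochains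
(functions on faces of cardinality `k`). -/
def lapUp (X : Finset (Finset V)) (k : ℕ) (f : Finset V → ℝ) : Finset V → ℝ :=
  bdry X (k + 1) (delta X k f)

/-- The lower Laplacian `L^down_{k-1} = δ_{k-2} ∂_{k-1}` acting on `(k-1)`-cochains. -/
def lapDown (X : Finset (Finset V)) (k : ℕ) (f : Finset V → ℝ) : Finset V → ℝ :=
  delta X (k - 1) (bdry X k f)

/-- `f ∈ Z_{k-1}(X;ℝ) = ker ∂_{k-1}`. -/
def IsCycle (X : Finset (Finset V)) (k : ℕ) (f : Finset V → ℝ) : Prop :=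
  ∀ σ : Finset V, bdry X k f σ = 0

/-- `f ∈ B^{k-1}(X;ℝ) = im δ_{k-2}` (as a cochain, i.e. on the `(k-1)`-faces). -/
def IsCobdry (X : Finset (Finset V)) (k : ℕ) (f : Finset V → ℝ) : Prop :=
  ∃ g : Finset V → ℝ, ∀ σ ∈ faces X k, f σ = delta X (k - 1) g σ

/-- The spectral gap `λ(X)`: the minimum of the Rayleigh quotient
`⟨L^up_{k-1}(X) f, f⟩ / ⟨f, f⟩` over nonzero `f ∈ Z_{k-1}(X;ℝ)`. -/
noncomputable def spectralGap (X : Finset (Finset V)) (k : ℕ) : ℝ :=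
  sInf {r : ℝ | ∃ f : Finset V → ℝ, IsCycle X k f ∧ inn X k f f ≠ 0 ∧
    r = inn X k (lapUp X k f) f / inn X k f f}

/-- A partition of `V` into `m` (nonempty) parts. -/
def IsPartition {m : ℕ} (A : Fin m → Finset V) : Prop :=
  (∀ i, (A i).Nonempty) ∧ ∀ v : V, ∃! i, v ∈ A i

/-- The linear order on `V` is adapted to the family of parts `A`. -/
def OrderAdapted {m : ℕ} (A : Fin m → Finset V) : Prop :=
  ∀ i j : Fin m, i < j → ∀ v ∈ A i, ∀ w ∈ A j, v < w

/-- `F(A_0,…,A_k)`: the `k`-faces of `X` with exactly one vertex in each part. -/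
def Fset (X : Finset (Finset V)) (k : ℕ) (A : Fin (k + 1) → Finset V) : Finset (Finset V) :=
  (faces X (k + 1)).filter fun τ => ∀ i, (τ ∩ A i).card = 1

/-- `F^∂(A_0,…,A_k)`: the `(k+1)`-element members of `K(X)` with exactly one vertex
in each part. -/
def Fpar (X : Finset (Finset V)) (k : ℕ) (A : Fin (k + 1) → Finset V) : Finset (Finset V) :=
  (faces (completion X k) (k + 1)).filter fun τ => ∀ i, (τ ∩ A i).card = 1

/-- The value `|V|·|F(A_0,…,A_k)| / |F^∂(A_0,…,A_k)|` of a partition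
(`⊤` if the denominator is `0`). -/
noncomputable def cheegerVal (X : Finset (Finset V)) (k : ℕ) (A : Fin (k + 1) → Finset V) :
    EReal :=
  if (Fpar X k A).card = 0 then ⊤
  else (((Fintype.card V * (Fset X k A).card : ℝ) / ((Fpar X k A).card : ℝ) : ℝ) : EReal)

/-- The Cheeger constant `h(X)`. -/
noncomputable def cheeger (X : Finset (Finset V)) (k : ℕ) : EReal :=
  sInf {r : EReal | ∃ A : Fin (k + 1) → Finset V, IsPartition A ∧ r = cheegerVal X k A}

/-- `d(σ)`: the number of members of `F^∂(A_0,…,A_k)` containing `σ`. -/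
def degPar (X : Finset (Finset V)) (k : ℕ) (A : Fin (k + 1) → Finset V) (σ : Finset V) : ℕ :=
  ((Fpar X k A).filter fun τ => σ ⊆ τ).card

/-- `C(X)` (with respect to the partition `A`):
the maximum over `τ ∈ F^∂(A_0,…,A_k)` of `∑_{v ∈ τ} d(τ \ {v})`. -/
def Cconst (X : Finset (Finset V)) (k : ℕ) (A : Fin (k + 1) → Finset V) : ℕ :=
  (Fpar X k A).sup fun τ => ∑ v ∈ τ, degPar X k A (τ.erase v)

/-- The cochain associated to a partition `A`: `σ ↦ (-1)^l·|A_l|` if `A_l` is the unique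
part disjoint from `σ`, and `0` otherwise. -/
def assocCochain {k : ℕ} (A : Fin (k + 1) → Finset V) (σ : Finset V) : ℝ :=
  if (Finset.univ.filter fun l => σ ∩ A l = ∅).card = 1 then
    ∑ l ∈ Finset.univ.filter fun l => σ ∩ A l = ∅, (-1 : ℝ) ^ (l : ℕ) * ((A l).card : ℝ)
  else 0

/-- The `Z₂`-coboundary: a `(c-1)`-cochain `f` is sent to
`τ ↦ ∑_{v ∈ τ} f (τ \ {v})`. -/
def deltaZ2 (f : Finset V → ZMod 2) (τ : Finset V) : ZMod 2 :=
  ∑ v ∈ τ, f (τ.erase v)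

/-- The support of the `Z₂`-coboundary of `f` in `X`: the faces of `X` of cardinality
`k + 1` on which the `Z₂`-coboundary of `f` is nonzero.  Its cardinality is `|δ_X f|`. -/
def suppDelta (X : Finset (Finset V)) (k : ℕ) (f : Finset V → ZMod 2) : Finset (Finset V) :=
  (faces X (k + 1)).filter fun τ => deltaZ2 f τ ≠ 0

/-- `F(A_0,…,A_{k-1})`: the `(k-1)`-faces of `X` with exactly one vertex in each of
the `k` parts. -/
def FsetLow (X : Finset (Finset V)) (k : ℕ) (A : Fin k → Finset V) : Finset (Finset V) :=
  (faces X k).filter fun σ => ∀ i, (σ ∩ A i).card = 1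

/-- The Cheeger-type constant `h'(X)`. -/
noncomputable def cheeger' (X : Finset (Finset V)) (k : ℕ) : EReal :=
  sInf {r : EReal | ∃ (A : Fin k → Finset V) (f : Finset V → ZMod 2),
    IsPartition A ∧ (∀ σ, f σ ≠ 0 → σ ∈ FsetLow X k A) ∧
    r = if (suppDelta (completion X k) k f).card = 0 then (⊤ : EReal)
        else (((Fintype.card V * (suppDelta X k f).card : ℝ) /
              ((suppDelta (completion X k) k f).card : ℝ) : ℝ) : EReal)}

/-- The Hamming norm of a `Z₂`-cochain on the faces of cardinality `c`. -/
def hamming (X : Finset (Finset V)) (c : ℕ) (f : Finset V → ZMod 2) : ℕ :=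
  ((faces X c).filter fun σ => f σ ≠ 0).card

/-- `|[f]|`: the minimum Hamming norm of `f + δ_X g` over `g ∈ C^{k-2}(X;Z₂)`. -/
noncomputable def normClass (X : Finset (Finset V)) (k : ℕ) (f : Finset V → ZMod 2) : ℕ :=
  sInf {m : ℕ | ∃ g : Finset V → ZMod 2, m = hamming X k fun σ => f σ + deltaZ2 g σ}

/-- The coboundary expansion `φ(X) = min_f |δ_X f| / |[f]|` (quotients with denominator
`0` are `∞`). -/
noncomputable def phi (X : Finset (Finset V)) (k : ℕ) : EReal :=
  sInf {r : EReal | ∃ f : Finset V → ZMod 2,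
    r = if normClass X k f = 0 then (⊤ : EReal)
        else ((((suppDelta X k f).card : ℝ) / (normClass X k f : ℝ) : ℝ) : EReal)}

/-- `h̃(X) = min_f |V|·|δ_X f| / |δ_{K(X)} f|` (quotients with denominator `0` are `∞`). -/
noncomputable def htilde (X : Finset (Finset V)) (k : ℕ) : EReal :=
  sInf {r : EReal | ∃ f : Finset V → ZMod 2,
    r = if (suppDelta (completion X k) k f).card = 0 then (⊤ : EReal)
        else (((Fintype.card V * (suppDelta X k f).card : ℝ) /
              ((suppDelta (completion X k) k f).card : ℝ) : ℝ) : EReal)}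

/-! Write `f = z + δg` with `z` a cycle orthogonal to the coboundaries; `z ≠ 0` because `f` is not
a coboundary, and `δg` is invisible to both quadratic forms since `δδ = 0`. On the complete
`k`-dimensional complex `K_n^k` on `V` one has `∂δ + δ∂ = n` in degree `k - 1`, so the cycle `z`
satisfies `⟨L^up_{K_n^k} z, z⟩ = n⟨z, z⟩`. As `K(X) ⊆ K_n^k`, this gives
`λ(X)⟨L^up_{K(X)} f, f⟩ ≤ λ(X) n ⟨z, z⟩ ≤ n⟨L^up_X z, z⟩ = n⟨L^up_X f, f⟩`. -/

section Cochains

variable {V : Type*} {X Y : Finset (Finset V)} {c : ℕ}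

lemma mem_faces {σ : Finset V} : σ ∈ faces X c ↔ σ ∈ X ∧ σ.card = c :=
  mem_filter

lemma inn_self_nonneg (X : Finset (Finset V)) (c : ℕ) (f : Finset V → ℝ) : 0 ≤ inn X c f f :=
  sum_nonneg fun σ _ => mul_self_nonneg (f σ)

lemma eq_zero_of_inn_self_eq_zero {f : Finset V → ℝ} (h : inn X c f f = 0) :
    ∀ σ ∈ faces X c, f σ = 0 := fun σ hσ =>
  mul_self_eq_zero.1 ((sum_eq_zero_iff_of_nonneg fun σ _ => mul_self_nonneg (f σ)).1 h σ hσ)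

lemma inn_eq_of_support {z : Finset V → ℝ} (hXY : faces X c ⊆ faces Y c)
    (hz : ∀ σ ∉ faces X c, z σ = 0) (w : Finset V → ℝ) : inn Y c z w = inn X c z w :=
  (sum_subset hXY fun σ _ hσ => by rw [hz σ hσ, zero_mul]).symm

end Cochains

lemma sum_sum_erase_eq_zero_of_antisymm {α : Type*} [DecidableEq α] {s : Finset α}
    {F : α → α → ℝ} (hF : ∀ v ∈ s, ∀ w ∈ s, v ≠ w → F v w = -F w v) :
    ∑ v ∈ s, ∑ w ∈ s.erase v, F v w = 0 := by
  set G : α → α → ℝ := fun v w => if v = w then 0 else F v w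
  have hG : ∀ v ∈ s, ∀ w ∈ s, G v w = -G w v := by
    intro v hv w hw
    by_cases h : v = w
    · simp [G, h]
    · simp [G, h, Ne.symm h, hF v hv w hw h]
  have hsum : ∑ v ∈ s, ∑ w ∈ s.erase v, F v w = ∑ v ∈ s, ∑ w ∈ s, G v w := by
    refine sum_congr rfl fun v _ => ?_
    rw [← sum_erase s (f := G v) (a := v) (by simp [G])]
    exact sum_congr rfl fun w hw => by simp [G, Ne.symm (ne_of_mem_erase hw)]
  have hneg : ∑ v ∈ s, ∑ w ∈ s, G v w = -∑ v ∈ s, ∑ w ∈ s, G v w :=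
    calc ∑ v ∈ s, ∑ w ∈ s, G v w = ∑ v ∈ s, ∑ w ∈ s, -G w v :=
          sum_congr rfl fun v hv => sum_congr rfl fun w hw => hG v hv w hw
      _ = ∑ w ∈ s, ∑ v ∈ s, -G w v := sum_comm
      _ = -∑ v ∈ s, ∑ w ∈ s, G v w := by simp only [sum_neg_distrib]
  linarith

section Combinatorics

variable {V : Type*} [LinearOrder V]

def faceSign (τ : Finset V) (v : V) : ℝ :=
  (-1) ^ #{w ∈ τ | w < v}

lemma faceSign_mul_self (τ : Finset V) (v : V) : faceSign τ v * faceSign τ v = 1 := by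
  rw [faceSign, ← pow_add]
  exact Even.neg_one_pow ⟨_, rfl⟩

variable [DecidableEq V]

lemma faceSign_erase_of_lt {τ : Finset V} {v w : V} (h : w < v) :
    faceSign (τ.erase v) w = faceSign τ w := by
  rw [faceSign, faceSign, filter_erase, erase_eq_of_notMem]
  exact fun hmem => lt_asymm h (mem_filter.1 hmem).2

lemma faceSign_erase_of_gt {τ : Finset V} {v w : V} (hv : v ∈ τ) (h : v < w) :
    faceSign (τ.erase v) w = -faceSign τ w := by
  have hmem : v ∈ {x ∈ τ | x < w} := mem_filter.2 ⟨hv, h⟩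
  obtain ⟨m, hm⟩ := Nat.exists_eq_add_of_lt (card_pos.2 ⟨v, hmem⟩)
  rw [faceSign, faceSign, filter_erase, card_erase_of_mem hmem, hm]
  simp [pow_succ]

lemma faceSign_anticomm {τ : Finset V} {v w : V} (hv : v ∈ τ) (hw : w ∈ τ) (hvw : v ≠ w) :
    faceSign τ v * faceSign (τ.erase v) w = -(faceSign τ w * faceSign (τ.erase w) v) := by
  rcases hvw.lt_or_gt with h | h
  · rw [faceSign_erase_of_gt hv h, faceSign_erase_of_lt h]; ring
  · rw [faceSign_erase_of_lt h, faceSign_erase_of_gt hw h]; ring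

lemma faceSign_insert_mul_faceSign_insert {σ : Finset V} {u v : V} (hu : u ∉ σ) (hv : v ∈ σ) :
    faceSign (insert u σ) u * faceSign (insert u σ) v =
      -(faceSign σ v * faceSign (insert u (σ.erase v)) u) := by
  have huv : u ≠ v := fun h => hu (h ▸ hv)
  have h := faceSign_anticomm (mem_insert_self u σ) (mem_insert_of_mem hv) huv
  rw [erase_insert hu, erase_insert_of_ne huv] at h
  linear_combination (faceSign (insert u σ) v * faceSign σ v) * h
    - faceSign (insert u σ) u * faceSign (insert u σ) v * faceSign_mul_self σ v
    - faceSign σ v * faceSign (insert u (σ.erase v)) u * faceSign_mul_self (insert u σ) v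

lemma incidence_erase {τ : Finset V} {v : V} (hv : v ∈ τ) :
    incidence τ (τ.erase v) = faceSign τ v := by
  rw [incidence, if_pos ⟨erase_subset v τ, card_erase_add_one hv⟩, ← sdiff_singleton_eq_erase,
    Finset.sdiff_sdiff_eq_self (singleton_subset_iff.2 hv), sum_singleton, faceSign]

lemma exists_eq_erase_of_incidence_ne_zero {τ σ : Finset V} (h : incidence τ σ ≠ 0) :
    ∃ v ∈ τ, σ = τ.erase v := by
  rw [incidence] at h
  split_ifs at h with hστ
  swap
  · exact absurd rfl h
  obtain ⟨hsub, hcard⟩ := hστ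
  obtain ⟨v, hv⟩ := card_eq_one.1 (show #(τ \ σ) = 1 by rw [card_sdiff_of_subset hsub]; omega)
  refine ⟨v, (mem_sdiff.1 (hv ▸ mem_singleton_self v)).1, ?_⟩
  rw [← sdiff_singleton_eq_erase, ← hv, Finset.sdiff_sdiff_eq_self hsub]

lemma incidence_eq_zero_of_notMem_faces {X : Finset (Finset V)} (hX : IsComplex X) {k : ℕ}
    {σ ρ : Finset V} (hσ : σ ∈ faces X k) (hρ : ρ ∉ faces X (k - 1)) : incidence σ ρ = 0 := by
  by_contra h
  obtain ⟨v, hv, rfl⟩ := exists_eq_erase_of_incidence_ne_zero h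
  obtain ⟨hσX, rfl⟩ := mem_faces.1 hσ
  exact hρ (mem_faces.2 ⟨hX σ hσX _ (erase_subset v σ), card_erase_of_mem hv⟩)

end Combinatorics


section Operators

variable {V : Type*} [DecidableEq V] [LinearOrder V] {X Y : Finset (Finset V)} {c k : ℕ}

lemma delta_eq_sum_erase {τ : Finset V} (h : ∀ v ∈ τ, τ.erase v ∈ faces Y c)
    (f : Finset V → ℝ) : delta Y c f τ = ∑ v ∈ τ, faceSign τ v * f (τ.erase v) := by
  have himage : ∑ v ∈ τ, faceSign τ v * f (τ.erase v) =
      ∑ ρ ∈ τ.image τ.erase, incidence τ ρ * f ρ := by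
    rw [sum_image τ.erase_injOn]
    exact sum_congr rfl fun v hv => by rw [incidence_erase hv]
  rw [himage, delta]
  refine (sum_subset (image_subset_iff.2 h) fun ρ _ hρ => ?_).symm
  by_contra hne
  obtain ⟨v, hv, rfl⟩ := exists_eq_erase_of_incidence_ne_zero (left_ne_zero_of_mul hne)
  exact hρ (mem_image_of_mem _ hv)

lemma bdry_eq_sum_insert [Fintype V] {σ : Finset V} (h : ∀ u ∉ σ, insert u σ ∈ faces Y c)
    (f : Finset V → ℝ) :
    bdry Y c f σ = ∑ u ∈ σᶜ, faceSign (insert u σ) u * f (insert u σ) := by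
  have himage : ∑ u ∈ σᶜ, faceSign (insert u σ) u * f (insert u σ) =
      ∑ τ ∈ σᶜ.image (insert · σ), incidence τ σ * f τ := by
    rw [sum_image (insert_inj_on' σ)]
    refine sum_congr rfl fun u hu => ?_
    rw [← incidence_erase (mem_insert_self u σ), erase_insert (mem_compl.1 hu)]
  rw [himage, bdry]
  refine (sum_subset (image_subset_iff.2 fun u hu => h u (mem_compl.1 hu)) fun τ _ hτ => ?_).symm
  by_contra hne
  obtain ⟨v, hv, rfl⟩ := exists_eq_erase_of_incidence_ne_zero (left_ne_zero_of_mul hne)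
  exact hτ (mem_image.2 ⟨v, by simp, insert_erase hv⟩)

lemma delta_delta (hY : IsComplex Y) {τ : Finset V} (hτ : τ ∈ Y) (hcard : τ.card = k + 1)
    (g : Finset V → ℝ) : delta Y k (delta Y (k - 1) g) τ = 0 := by
  have hface : ∀ ρ ⊆ τ, ρ ∈ faces Y ρ.card := fun ρ hρ => mem_faces.2 ⟨hY τ hτ ρ hρ, rfl⟩
  rw [delta_eq_sum_erase fun v hv => by
    simpa [card_erase_of_mem hv, hcard] using hface _ (erase_subset v τ)]
  have hinner : ∀ v ∈ τ, delta Y (k - 1) g (τ.erase v) =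
      ∑ w ∈ τ.erase v, faceSign (τ.erase v) w * g ((τ.erase v).erase w) := fun v hv =>
    delta_eq_sum_erase (fun w hw => by
      simpa [card_erase_of_mem hw, card_erase_of_mem hv, hcard] using
        hface _ ((erase_subset w _).trans (erase_subset v τ))) g
  calc ∑ v ∈ τ, faceSign τ v * delta Y (k - 1) g (τ.erase v)
      = ∑ v ∈ τ, ∑ w ∈ τ.erase v,
          faceSign τ v * faceSign (τ.erase v) w * g ((τ.erase v).erase w) :=
        sum_congr rfl fun v hv => by simp only [hinner v hv, mul_sum, mul_assoc]
    _ = 0 := sum_sum_erase_eq_zero_of_antisymm fun v hv w hw hvw => by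
        rw [faceSign_anticomm hv hw hvw, erase_right_comm]
        ring

lemma inn_lapUp_eq_sum_sq (Y : Finset (Finset V)) (c : ℕ) (f : Finset V → ℝ) :
    inn Y c (lapUp Y c f) f = ∑ τ ∈ faces Y (c + 1), delta Y c f τ ^ 2 := by
  simp only [inn, lapUp, bdry, delta, sum_mul, mul_sum]
  rw [sum_comm]
  refine sum_congr rfl fun τ _ => ?_
  rw [sq, sum_mul_sum]
  exact sum_congr rfl fun σ _ => sum_congr rfl fun σ' _ => by ring

lemma inn_lapUp_nonneg (Y : Finset (Finset V)) (c : ℕ) (f : Finset V → ℝ) :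
    0 ≤ inn Y c (lapUp Y c f) f := by
  rw [inn_lapUp_eq_sum_sq]
  exact sum_nonneg fun τ _ => sq_nonneg _

lemma inn_lapUp_eq_of_eq_add_delta (hY : IsComplex Y) {f z g : Finset V → ℝ}
    (h : ∀ σ ∈ faces Y k, f σ = z σ + delta Y (k - 1) g σ) :
    inn Y k (lapUp Y k f) f = inn Y k (lapUp Y k z) z := by
  rw [inn_lapUp_eq_sum_sq, inn_lapUp_eq_sum_sq]
  refine sum_congr rfl fun τ hτ => ?_
  obtain ⟨hτY, hcard⟩ := mem_faces.1 hτ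
  have hadd : delta Y k f τ = delta Y k z τ + delta Y k (delta Y (k - 1) g) τ := by
    rw [delta, delta, delta, ← sum_add_distrib]
    exact sum_congr rfl fun σ hσ => by rw [h σ hσ, mul_add]
  rw [hadd, delta_delta hY hτY hcard, add_zero]

lemma delta_eq_of_support {z : Finset V → ℝ} (hXY : faces X c ⊆ faces Y c)
    (hz : ∀ σ ∉ faces X c, z σ = 0) : delta Y c z = delta X c z :=
  funext fun _ => (sum_subset hXY fun σ _ hσ => by rw [hz σ hσ, mul_zero]).symm

lemma bdry_eq_of_support {z : Finset V → ℝ} (hXY : faces X c ⊆ faces Y c)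
    (hz : ∀ σ ∉ faces X c, z σ = 0) : bdry Y c z = bdry X c z :=
  funext fun _ => (sum_subset hXY fun σ _ hσ => by rw [hz σ hσ, mul_zero]).symm

lemma inn_lapUp_le_of_faces_subset {z : Finset V → ℝ} (hk : faces X k ⊆ faces Y k)
    (hk1 : faces X (k + 1) ⊆ faces Y (k + 1)) (hz : ∀ σ ∉ faces X k, z σ = 0) :
    inn X k (lapUp X k z) z ≤ inn Y k (lapUp Y k z) z := by
  rw [inn_lapUp_eq_sum_sq, inn_lapUp_eq_sum_sq, delta_eq_of_support hk hz]
  exact sum_le_sum_of_subset_of_nonneg hk1 fun τ _ _ => sq_nonneg _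

end Operators

section Completion

variable {V : Type*} [DecidableEq V] [Fintype V] {X : Finset (Finset V)} {c k : ℕ}

lemma completion_isComplex (hX : IsComplex X) : IsComplex (completion X k) := by
  intro σ hσ τ hτ
  simp only [completion, mem_union, mem_filter, mem_univ, true_and] at hσ ⊢
  rcases hσ with hσ | ⟨hcard, herase⟩
  · exact Or.inl (hX σ hσ τ hτ)
  rcases hτ.eq_or_ssubset with rfl | hss
  · exact Or.inr ⟨hcard, herase⟩
  obtain ⟨v, hvσ, hvτ⟩ := exists_of_ssubset hss
  exact Or.inl (hX _ (herase v hvσ) τ (subset_erase.2 ⟨hss.subset, hvτ⟩))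

lemma faces_completion (h : c ≤ k) : faces (completion X k) c = faces X c := by
  ext σ
  simp only [mem_faces, completion, mem_union, mem_filter, mem_univ, true_and]
  constructor
  · rintro ⟨hσ | ⟨hcard, -⟩, rfl⟩
    · exact ⟨hσ, rfl⟩
    · omega
  · exact fun ⟨hσ, hc⟩ => ⟨Or.inl hσ, hc⟩

lemma delta_completion [LinearOrder V] (h : c ≤ k) : delta (completion X k) c = delta X c := by
  ext f τ
  rw [delta, delta, faces_completion h]

lemma mem_faces_completeComplex {σ : Finset V} (h : c ≤ k + 1) :
    σ ∈ faces (completeComplex V k) c ↔ σ.card = c := by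
  simp only [mem_faces, completeComplex, mem_filter, mem_univ, true_and]
  exact ⟨And.right, fun hc => ⟨hc ▸ h, hc⟩⟩

lemma mem_faces_completeComplex_of_card {σ : Finset V} (hσ : σ.card = c)
    (h : c ≤ k + 1) : σ ∈ faces (completeComplex V k) c :=
  (mem_faces_completeComplex h).2 hσ

lemma faces_subset_completeComplex (X : Finset (Finset V)) (h : c ≤ k + 1) :
    faces X c ⊆ faces (completeComplex V k) c :=
  fun _ hσ => mem_faces_completeComplex_of_card (mem_faces.1 hσ).2 h

end Completion

section CompleteComplex

variable {V : Type*} [DecidableEq V] [Fintype V] [LinearOrder V] {k : ℕ}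

lemma lapUp_completeComplex (z : Finset V → ℝ) {σ : Finset V} (hσ : σ.card = k) :
    lapUp (completeComplex V k) k z σ = ∑ u ∈ σᶜ, (z σ + ∑ v ∈ σ,
      faceSign (insert u σ) u * faceSign (insert u σ) v * z (insert u (σ.erase v))) := by
  rw [lapUp, bdry_eq_sum_insert fun u hu =>
    mem_faces_completeComplex_of_card (by rw [card_insert_of_notMem hu, hσ]) le_rfl]
  refine sum_congr rfl fun u hu => ?_
  have hu : u ∉ σ := mem_compl.1 hu
  rw [delta_eq_sum_erase fun v hv => mem_faces_completeComplex_of_card (by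
      rw [card_erase_of_mem hv, card_insert_of_notMem hu, hσ]; rfl) (by omega),
    sum_insert hu, erase_insert hu, mul_add, ← mul_assoc, faceSign_mul_self, one_mul, mul_sum]
  exact congrArg _ (sum_congr rfl fun v hv => by
    rw [erase_insert_of_ne (fun h : u = v => hu (h ▸ hv)), mul_assoc])

lemma lapDown_completeComplex (z : Finset V → ℝ) {σ : Finset V} (hσ : σ.card = k) :
    lapDown (completeComplex V k) k z σ = ∑ v ∈ σ, (z σ + ∑ u ∈ σᶜ,
      faceSign σ v * faceSign (insert u (σ.erase v)) u * z (insert u (σ.erase v))) := by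
  rw [lapDown, delta_eq_sum_erase (c := k - 1) fun v hv =>
    mem_faces_completeComplex_of_card (by rw [card_erase_of_mem hv, hσ]) (by omega)]
  refine sum_congr rfl fun v hv => ?_
  have hk : 0 < k := hσ ▸ card_pos.2 ⟨v, hv⟩
  rw [bdry_eq_sum_insert (c := k) fun u hu => mem_faces_completeComplex_of_card (by
      rw [card_insert_of_notMem hu, card_erase_of_mem hv]; omega) (by omega),
    compl_erase, sum_insert (fun h => mem_compl.1 h hv), insert_erase hv, mul_add, ← mul_assoc,
    faceSign_mul_self, one_mul, mul_sum]
  exact congrArg _ (sum_congr rfl fun u _ => by rw [mul_assoc])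

lemma lapUp_add_lapDown_completeComplex (z : Finset V → ℝ) {σ : Finset V} (hσ : σ.card = k) :
    lapUp (completeComplex V k) k z σ + lapDown (completeComplex V k) k z σ =
      Fintype.card V * z σ := by
  have hcross : ∑ u ∈ σᶜ, ∑ v ∈ σ,
      faceSign (insert u σ) u * faceSign (insert u σ) v * z (insert u (σ.erase v)) +
      ∑ v ∈ σ, ∑ u ∈ σᶜ,
      faceSign σ v * faceSign (insert u (σ.erase v)) u * z (insert u (σ.erase v)) = 0 := by
    rw [sum_comm (s := σ), ← sum_add_distrib]
    refine sum_eq_zero fun u hu => ?_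
    rw [← sum_add_distrib]
    refine sum_eq_zero fun v hv => ?_
    rw [faceSign_insert_mul_faceSign_insert (mem_compl.1 hu) hv]
    ring
  rw [lapUp_completeComplex z hσ, lapDown_completeComplex z hσ, sum_add_distrib, sum_add_distrib,
    sum_const, sum_const, add_add_add_comm, hcross, add_zero, ← add_smul, card_compl_add_card,
    nsmul_eq_mul]

lemma inn_lapUp_completeComplex_of_isCycle {z : Finset V → ℝ}
    (hz : IsCycle (completeComplex V k) k z) :
    inn (completeComplex V k) k (lapUp (completeComplex V k) k z) z =
      Fintype.card V * inn (completeComplex V k) k z z := by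
  rw [inn, inn, mul_sum]
  refine sum_congr rfl fun σ hσ => ?_
  have hlapDown : lapDown (completeComplex V k) k z σ = 0 := by
    simp only [lapDown, delta, hz _, mul_zero, sum_const_zero]
  have := lapUp_add_lapDown_completeComplex z ((mem_faces_completeComplex (by omega)).1 hσ)
  rw [hlapDown, add_zero] at this
  rw [this, mul_assoc]

lemma inn_lapUp_completion_le_of_isCycle {X : Finset (Finset V)} {z : Finset V → ℝ}
    (hz_supp : ∀ σ ∉ faces X k, z σ = 0) (hz : IsCycle X k z) :
    inn (completion X k) k (lapUp (completion X k) k z) z ≤ Fintype.card V * inn X k z z := by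
  have hXY := faces_subset_completeComplex (V := V) X k.le_succ
  have hY_cyc : IsCycle (completeComplex V k) k z := by
    rw [IsCycle, bdry_eq_of_support hXY hz_supp]
    exact hz
  calc inn (completion X k) k (lapUp (completion X k) k z) z
      ≤ inn (completeComplex V k) k (lapUp (completeComplex V k) k z) z :=
        inn_lapUp_le_of_faces_subset ((faces_completion le_rfl).trans_subset hXY)
          (faces_subset_completeComplex _ le_rfl) (by rwa [faces_completion le_rfl])
    _ = Fintype.card V * inn X k z z := by
        rw [inn_lapUp_completeComplex_of_isCycle hY_cyc, inn_eq_of_support hXY hz_supp]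

end CompleteComplex

section Rayleigh

variable {V : Type*} [DecidableEq V] [LinearOrder V]

lemma delta_single_eq_incidence {X : Finset (Finset V)} (hX : IsComplex X) {k : ℕ}
    {σ : Finset V} (hσ : σ ∈ faces X k) (ρ : Finset V) :
    delta X (k - 1) (Pi.single ρ 1) σ = incidence σ ρ := by
  simp only [delta, Pi.single_apply, mul_ite, mul_one, mul_zero, sum_ite_eq']
  split_ifs with hρ
  · rfl
  · exact (incidence_eq_zero_of_notMem_faces hX hσ hρ).symm

lemma exists_isCycle_eq_add_delta {X : Finset (Finset V)} (hX : IsComplex X) (k : ℕ)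
    (f : Finset V → ℝ) :
    ∃ z g : Finset V → ℝ, (∀ σ ∈ faces X k, f σ = z σ + delta X (k - 1) g σ) ∧
      (∀ σ ∉ faces X k, z σ = 0) ∧ IsCycle X k z := by
  let L : (Finset V → ℝ) →ₗ[ℝ] EuclideanSpace ℝ (faces X k) :=
    { toFun g := WithLp.toLp 2 fun σ => delta X (k - 1) g σ
      map_add' a b := by ext σ; simp [delta, mul_add, sum_add_distrib]
      map_smul' r a := by ext σ; simp [delta, mul_sum, mul_left_comm] }
  have hL : ∀ g σ, L g σ = delta X (k - 1) g σ := fun _ _ => rfl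
  obtain ⟨_, ⟨g, rfl⟩, z, hz, hfz⟩ :=
    (LinearMap.range L).exists_add_mem_mem_orthogonal (WithLp.toLp 2 fun σ => f σ)
  refine ⟨fun σ => if hσ : σ ∈ faces X k then z ⟨σ, hσ⟩ else 0, g, fun σ hσ => ?_,
    fun σ hσ => dif_neg hσ, fun ρ => ?_⟩
  · simpa [dif_pos hσ, add_comm, hL] using congrArg (· ⟨σ, hσ⟩) hfz
  -- `∂z(ρ) = ⟨δ 1_ρ, z⟩`, and `z` is orthogonal to the coboundaries
  have horth := hz (L (Pi.single ρ 1)) (LinearMap.mem_range_self L _)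
  simp only [PiLp.inner_apply, hL, RCLike.inner_apply, conj_trivial] at horth
  rw [bdry, ← sum_attach, ← horth]
  refine sum_congr rfl fun σ _ => ?_
  rw [dif_pos σ.2, delta_single_eq_incidence hX σ.2, mul_comm]

lemma zero_mem_lowerBounds_rayleigh (X : Finset (Finset V)) (k : ℕ) :
    (0 : ℝ) ∈ lowerBounds {r : ℝ | ∃ f : Finset V → ℝ, IsCycle X k f ∧ inn X k f f ≠ 0 ∧
      r = inn X k (lapUp X k f) f / inn X k f f} := by
  rintro r ⟨f, -, -, rfl⟩
  exact div_nonneg (inn_lapUp_nonneg X k f) (inn_self_nonneg X k f)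

lemma spectralGap_nonneg (X : Finset (Finset V)) (k : ℕ) : 0 ≤ spectralGap X k :=
  Real.sInf_nonneg (zero_mem_lowerBounds_rayleigh X k)

lemma spectralGap_mul_inn_le {X : Finset (Finset V)} {k : ℕ} {z : Finset V → ℝ}
    (hz : IsCycle X k z) (hzz : inn X k z z ≠ 0) :
    spectralGap X k * inn X k z z ≤ inn X k (lapUp X k z) z :=
  (le_div_iff₀ ((inn_self_nonneg X k z).lt_of_ne' hzz)).1
    (csInf_le ⟨0, zero_mem_lowerBounds_rayleigh X k⟩ ⟨z, hz, hzz, rfl⟩)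

end Rayleigh

theorem spectralGap_mul_lapUp_completion_le_general
    {V : Type*} [DecidableEq V] [Fintype V] [LinearOrder V]
    (X : Finset (Finset V)) (k : ℕ)
    (hX : IsComplex X) :
    ∀ f : Finset V → ℝ, ¬ IsCobdry X k f →
      spectralGap X k * inn (completion X k) k (lapUp (completion X k) k f) f
        ≤ (Fintype.card V : ℝ) * inn X k (lapUp X k f) f := by
  intro f hf
  obtain ⟨z, g, hfz, hz_supp, hz_cyc⟩ := exists_isCycle_eq_add_delta hX k f
  have hzz : inn X k z z ≠ 0 := fun h =>
    hf ⟨g, fun σ hσ => by rw [hfz σ hσ, eq_zero_of_inn_self_eq_zero h σ hσ, zero_add]⟩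
  have hfzK : ∀ σ ∈ faces (completion X k) k, f σ = z σ + delta (completion X k) (k - 1) g σ := by
    rwa [faces_completion le_rfl, delta_completion (Nat.sub_le k 1)]
  calc spectralGap X k * inn (completion X k) k (lapUp (completion X k) k f) f
      = spectralGap X k * inn (completion X k) k (lapUp (completion X k) k z) z := by
        rw [inn_lapUp_eq_of_eq_add_delta (completion_isComplex hX) hfzK]
    _ ≤ spectralGap X k * (Fintype.card V * inn X k z z) :=
        mul_le_mul_of_nonneg_left (inn_lapUp_completion_le_of_isCycle hz_supp hz_cyc)
          (spectralGap_nonneg X k)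
    _ = Fintype.card V * (spectralGap X k * inn X k z z) := by ring
    _ ≤ Fintype.card V * inn X k (lapUp X k z) z :=
        mul_le_mul_of_nonneg_left (spectralGap_mul_inn_le hz_cyc hzz) (Nat.cast_nonneg _)
    _ = Fintype.card V * inn X k (lapUp X k f) f := by
        rw [inn_lapUp_eq_of_eq_add_delta hX hfz]

/-- **Lemma 3.2.**  Let `X` be a `k`-dimensional complex on `n` vertices with
`Z_{k-1}(X;ℝ) ≠ 0`.  Then for every `f ∈ C^{k-1}(X;ℝ)` with `f ∉ B^{k-1}(X;ℝ)`:
`λ(X)·⟨L^up_{k-1}(K(X)) f, f⟩ ≤ n·⟨L^up_{k-1}(X) f, f⟩`. -/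
theorem spectralGap_mul_lapUp_completion_le
    {V : Type*} [DecidableEq V] [Fintype V] [LinearOrder V]
    (X : Finset (Finset V)) (k : ℕ)
    (hX : IsComplex X) (hdim : IsDim X k)
    (hZ : ∃ f : Finset V → ℝ, IsCycle X k f ∧ inn X k f f ≠ 0) :
    ∀ f : Finset V → ℝ, ¬ IsCobdry X k f →
      spectralGap X k * inn (completion X k) k (lapUp (completion X k) k f) f
        ≤ (Fintype.card V : ℝ) * inn X k (lapUp X k f) f :=
  spectralGap_mul_lapUp_completion_le_general X k hX

end HigherCheeger
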